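/- Let n ≥ 7 be odd, and let O₁ = ((n-2,n-1,n),(1,2,…,n-2)) and O₆ = ((3,4,…,n),(1,2,3,n,n-1,…,4)). Then S⁻¹(T(S⁻¹(S⁻¹(O₁)))) ≃ O₆, i.e. applying S⁻¹ twice, then T, then S⁻¹ to O₁ yields an origami simultaneously conjugate to O₆. -/

import Mathlib

open Equiv

/-- The permutation of `Fin n` given by 1-based cycle notation `(a1, ..., ak)`:
each listed square `a` (an element of `{1, ..., n}`) corresponds to `a - 1 : Fin n`,
and the cycle sends each listed element to the next one, the last back to the first. -/
def cyc (n : ℕ) (l : List ℕ) : Equiv.Perm (Fin n) :=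
  (l.filterMap fun a => if h : a - 1 < n then some (⟨a - 1, h⟩ : Fin n) else none).formPerm

/-- Equivalence of origami pairs by simultaneous conjugation. -/
def OrigamiEquiv {n : ℕ} (p q : Equiv.Perm (Fin n) × Equiv.Perm (Fin n)) : Prop :=
  ∃ g : Equiv.Perm (Fin n), g * p.1 * g⁻¹ = q.1 ∧ g * p.2 * g⁻¹ = q.2

/-- The action of `T`: `T(h,v) = (h, v h⁻¹)`. -/
def Tact {n : ℕ} (p : Equiv.Perm (Fin n) × Equiv.Perm (Fin n)) :
    Equiv.Perm (Fin n) × Equiv.Perm (Fin n) := (p.1, p.2 * p.1⁻¹)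

/-- The action of `T⁻¹`: `T⁻¹(h,v) = (h, v h)`. -/
def TinvAct {n : ℕ} (p : Equiv.Perm (Fin n) × Equiv.Perm (Fin n)) :
    Equiv.Perm (Fin n) × Equiv.Perm (Fin n) := (p.1, p.2 * p.1)

/-- The action of `S`: `S(h,v) = (h v⁻¹, v)`. -/
def Sact {n : ℕ} (p : Equiv.Perm (Fin n) × Equiv.Perm (Fin n)) :
    Equiv.Perm (Fin n) × Equiv.Perm (Fin n) := (p.1 * p.2⁻¹, p.2)

/-- The action of `S⁻¹`: `S⁻¹(h,v) = (h v, v)`. -/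
def SinvAct {n : ℕ} (p : Equiv.Perm (Fin n) × Equiv.Perm (Fin n)) :
    Equiv.Perm (Fin n) × Equiv.Perm (Fin n) := (p.1 * p.2, p.2)

/-- `O₁ = ((n-2,n-1,n), (1,2,...,n-2))` -/
def OB1 (n : ℕ) : Equiv.Perm (Fin n) × Equiv.Perm (Fin n) :=
  (cyc n [n - 2, n - 1, n], cyc n (List.range' 1 (n - 2)))

/-- `O₆ = ((3,4,...,n), (1,2,3,n,n-1,...,4))` -/
def OB6 (n : ℕ) : Equiv.Perm (Fin n) × Equiv.Perm (Fin n) :=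
  (cyc n (List.range' 3 (n - 2)), cyc n ([1, 2, 3] ++ (List.range' 4 (n - 3)).reverse))

section aux
variable {α : Type*} [DecidableEq α]

lemma formPerm_conj : ∀ (l : List α) (σ : Equiv.Perm α),
    σ * l.formPerm * σ⁻¹ = (l.map σ).formPerm
  | [], σ => by simp
  | [x], σ => by simp
  | x :: y :: t, σ => by
    have ih := formPerm_conj (y :: t) σ
    simp only [List.map_cons] at ih ⊢
    rw [List.formPerm_cons_cons, List.formPerm_cons_cons, ← ih, swap_apply_apply]
    group

lemma formPerm_merge : ∀ (l₂ : List α) (a : α) (l₁ : List α),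
    (a :: (l₂ ++ l₁)).Nodup →
    (a :: l₁).formPerm * (a :: l₂).formPerm = (a :: (l₂ ++ l₁)).formPerm
  | [], a, l₁, _ => by simp
  | b :: t, a, l₁, h => by
    obtain ⟨ha, h2⟩ := List.nodup_cons.mp h
    have hab : a ≠ b := fun e => ha (e ▸ List.mem_cons_self)
    have hal : a ∉ l₁ := fun e => ha (List.mem_cons.mpr (Or.inr (List.mem_append.mpr (Or.inr e))))
    obtain ⟨hb, h3⟩ := List.nodup_cons.mp h2
    have hbl : b ∉ l₁ := fun e => hb (List.mem_append.mpr (Or.inr e))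
    have key : Equiv.swap a b * (a :: l₁).formPerm * (Equiv.swap a b)⁻¹ = (b :: l₁).formPerm := by
      rw [formPerm_conj]
      congr 1
      simp only [List.map_cons, swap_apply_left]
      congr 1
      exact (List.map_congr_left fun x hx => swap_apply_of_ne_of_ne
        (by rintro rfl; exact hal hx) (by rintro rfl; exact hbl hx)).trans (List.map_id _)
    have key2 : (a :: l₁).formPerm = (Equiv.swap a b)⁻¹ * (b :: l₁).formPerm * Equiv.swap a b := by
      rw [← key]; group
    have ih := formPerm_merge t b l₁ h2
    rw [List.formPerm_cons_cons, key2, List.cons_append, List.formPerm_cons_cons, ← ih,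
      Equiv.swap_inv]
    simp only [mul_assoc, Equiv.swap_mul_self_mul]

lemma filterMap_val (n : ℕ) : ∀ (l : List ℕ), (∀ a ∈ l, a - 1 < n) →
    ((l.filterMap fun a => if h : a - 1 < n then some (⟨a - 1, h⟩ : Fin n) else none).map Fin.val)
      = l.map (· - 1)
  | [], _ => rfl
  | a :: t, h => by
    have ha := h a List.mem_cons_self
    have ih := filterMap_val n t (fun x hx => h x (List.mem_cons_of_mem _ hx))
    simp [List.filterMap_cons, dif_pos ha, ih]

end aux

lemma cyc_eq {n : ℕ} {l : List ℕ} {L : List (Fin n)} (hl : l.map (· - 1) = L.map Fin.val) :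
    cyc n l = L.formPerm := by
  have hcond : ∀ a ∈ l, a - 1 < n := by
    intro a ha
    have : a - 1 ∈ L.map Fin.val := hl ▸ List.mem_map_of_mem (f := (· - 1)) ha
    obtain ⟨x, -, hx⟩ := List.mem_map.mp this
    exact hx ▸ x.isLt
  unfold cyc
  congr 1
  apply List.map_injective_iff.mpr Fin.val_injective
  rw [filterMap_val n l hcond, hl]

/-- `F n hpos k` is `k % n` as an element of `Fin n`. -/
def F (n : ℕ) (hpos : 0 < n) (k : ℕ) : Fin n := ⟨k % n, Nat.mod_lt _ hpos⟩

lemma FL_val {n : ℕ} (hpos : 0 < n) (s : List ℕ) (hs : ∀ k ∈ s, k < n) :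
    (s.map (F n hpos)).map Fin.val = s := by
  rw [List.map_map]
  exact (List.map_congr_left fun k hk => Nat.mod_eq_of_lt (hs k hk)).trans (List.map_id _)

def gfun (n : ℕ) (hn : 7 ≤ n) (x : Fin n) : Fin n :=
  if h : x.val + 3 < n then ⟨x.val + 3, h⟩
  else if x.val = n - 3 then ⟨0, by omega⟩
  else if x.val = n - 2 then ⟨2, by omega⟩
  else ⟨1, by omega⟩

def ginv (n : ℕ) (hn : 7 ≤ n) (y : Fin n) : Fin n :=
  if h : 3 ≤ y.val then ⟨y.val - 3, by omega⟩
  else if y.val = 0 then ⟨n - 3, by omega⟩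
  else if y.val = 2 then ⟨n - 2, by omega⟩
  else ⟨n - 1, by omega⟩

lemma gfun_val (n : ℕ) (hn : 7 ≤ n) (x : Fin n) : (gfun n hn x).val =
    if x.val + 3 < n then x.val + 3 else if x.val = n - 3 then 0
    else if x.val = n - 2 then 2 else 1 := by
  unfold gfun; split_ifs <;> rfl

lemma ginv_val (n : ℕ) (hn : 7 ≤ n) (y : Fin n) : (ginv n hn y).val =
    if 3 ≤ y.val then y.val - 3 else if y.val = 0 then n - 3
    else if y.val = 2 then n - 2 else n - 1 := by
  unfold ginv; split_ifs <;> rfl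

/-- The conjugating permutation. -/
def gperm (n : ℕ) (hn : 7 ≤ n) : Equiv.Perm (Fin n) where
  toFun := gfun n hn
  invFun := ginv n hn
  left_inv x := by
    have hx := x.isLt
    apply Fin.ext
    rw [ginv_val, gfun_val]
    rcases Nat.lt_or_ge (x.val + 3) n with h | h
    · simp only [if_pos h, if_pos (show 3 ≤ x.val + 3 by omega)]; omega
    · rcases (show x.val = n - 3 ∨ x.val = n - 2 ∨ x.val = n - 1 by omega) with h1 | h1 | h1
      · simp only [if_neg (show ¬ x.val + 3 < n by omega), if_pos h1,
          if_neg (show ¬ (3:ℕ) ≤ 0 by omega), if_pos rfl, eq_self_iff_true, if_true]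
        omega
      · simp only [if_neg (show ¬ x.val + 3 < n by omega), if_neg (show ¬ x.val = n - 3 by omega),
          if_pos h1, if_neg (show ¬ (3:ℕ) ≤ 2 by omega), if_neg (show (2:ℕ) ≠ 0 by omega),
          if_pos rfl, eq_self_iff_true, if_true]
        omega
      · simp only [if_neg (show ¬ x.val + 3 < n by omega), if_neg (show ¬ x.val = n - 3 by omega),
          if_neg (show ¬ x.val = n - 2 by omega), if_neg (show ¬ (3:ℕ) ≤ 1 by omega),
          if_neg (show (1:ℕ) ≠ 0 by omega), if_neg (show (1:ℕ) ≠ 2 by omega)]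
        omega
  right_inv y := by
    have hy := y.isLt
    apply Fin.ext
    rw [gfun_val, ginv_val]
    rcases Nat.lt_or_ge y.val 3 with h | h
    · rcases (show y.val = 0 ∨ y.val = 1 ∨ y.val = 2 by omega) with h1 | h1 | h1
      · simp only [if_neg (show ¬ (3:ℕ) ≤ y.val by omega), if_pos h1,
          if_neg (show ¬ n - 3 + 3 < n by omega), if_pos rfl, eq_self_iff_true, if_true]
        omega
      · simp only [if_neg (show ¬ (3:ℕ) ≤ y.val by omega), if_neg (show y.val ≠ 0 by omega),
          if_neg (show y.val ≠ 2 by omega), if_neg (show ¬ n - 1 + 3 < n by omega),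
          if_neg (show n - 1 ≠ n - 3 by omega), if_neg (show n - 1 ≠ n - 2 by omega)]
        omega
      · simp only [if_neg (show ¬ (3:ℕ) ≤ y.val by omega), if_neg (show y.val ≠ 0 by omega),
          if_pos h1, if_neg (show ¬ n - 2 + 3 < n by omega),
          if_neg (show n - 2 ≠ n - 3 by omega), if_pos rfl, eq_self_iff_true, if_true]
        omega
    · simp only [if_pos h, if_pos (show y.val - 3 + 3 < n by omega)]; omega

lemma gperm_apply {n : ℕ} (hn : 7 ≤ n) (hpos : 0 < n) (k : ℕ) (hk : k < n) :
    gperm n hn (F n hpos k) =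
      F n hpos (if k + 3 < n then k + 3 else if k = n - 3 then 0 else if k = n - 2 then 2 else 1) := by
  apply Fin.ext
  show (gfun n hn _).val = _
  rw [gfun_val]
  simp only [F, Nat.mod_eq_of_lt hk]
  rw [Nat.mod_eq_of_lt (show (if k + 3 < n then k + 3 else if k = n - 3 then 0 else if k = n - 2 then 2 else 1) < n by split_ifs <;> omega)]

lemma F_val {n : ℕ} (hpos : 0 < n) (k : ℕ) : (F n hpos k).val = k % n := rfl

lemma hperm_apply {n : ℕ} (hn : 7 ≤ n) (hpos : 0 < n) (k : ℕ) (hk : k < n) :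
    ([F n hpos (n-3), F n hpos (n-2), F n hpos (n-1)]).formPerm (F n hpos k) =
      F n hpos (if k = n - 3 then n - 2 else if k = n - 2 then n - 1
        else if k = n - 1 then n - 3 else k) := by
  have Fne : ∀ a b : ℕ, a < n → b < n → a ≠ b → F n hpos a ≠ F n hpos b := by
    intro a b ha hb hab he
    apply hab
    have := congrArg Fin.val he
    rwa [F_val, F_val, Nat.mod_eq_of_lt ha, Nat.mod_eq_of_lt hb] at this
  rw [List.formPerm_cons_cons, List.formPerm_pair, Equiv.Perm.mul_apply]
  rcases (show k = n-3 ∨ k = n-2 ∨ k = n-1 ∨ (k ≠ n-3 ∧ k ≠ n-2 ∧ k ≠ n-1) by omega)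
    with h | h | h | ⟨h1, h2, h3⟩
  · subst h
    rw [swap_apply_of_ne_of_ne (Fne _ _ (by omega) (by omega) (by omega))
        (Fne _ _ (by omega) (by omega) (by omega)), swap_apply_left, if_pos rfl]
  · subst h
    rw [swap_apply_left, swap_apply_of_ne_of_ne (Fne _ _ (by omega) (by omega) (by omega))
        (Fne _ _ (by omega) (by omega) (by omega)),
      if_neg (by omega), if_pos rfl]
  · subst h
    rw [swap_apply_right, swap_apply_right, if_neg (by omega), if_neg (by omega), if_pos rfl]
  · rw [swap_apply_of_ne_of_ne (Fne _ _ hk (by omega) h2) (Fne _ _ hk (by omega) h3),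
      swap_apply_of_ne_of_ne (Fne _ _ hk (by omega) h1) (Fne _ _ hk (by omega) h2),
      if_neg h1, if_neg h2, if_neg h3]


lemma range'_sub_one (a L : ℕ) (ha : 1 ≤ a) :
    (List.range' a L).map (· - 1) = List.range' (a-1) L := by
  apply List.ext_getElem (by simp)
  intro i h1 h2
  simp only [List.getElem_map, List.getElem_range']
  omega


theorem stmt17 (n : ℕ) (hn : 7 ≤ n) (hno : Odd n) :
    OrigamiEquiv (SinvAct (Tact (SinvAct (SinvAct (OB1 n))))) (OB6 n) := by
  have hpos : 0 < n := by omega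
  -- cyc identifications
  have hH : cyc n [n-2, n-1, n]
      = ([F n hpos (n-3), F n hpos (n-2), F n hpos (n-1)]).formPerm := by
    apply cyc_eq
    simp only [List.map_cons, List.map_nil, F_val,
      Nat.mod_eq_of_lt (show n-3 < n by omega), Nat.mod_eq_of_lt (show n-2 < n by omega),
      Nat.mod_eq_of_lt (show n-1 < n by omega), List.cons.injEq, and_true]
    omega
  have hV : cyc n (List.range' 1 (n-2)) = ((List.range (n-2)).map (F n hpos)).formPerm := by
    apply cyc_eq
    rw [FL_val hpos _ (by intro k hk; simp only [List.mem_range] at hk; omega),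
      range'_sub_one 1 (n-2) le_rfl, ← List.range_eq_range']
  have hH6 : cyc n (List.range' 3 (n-2)) = ((List.range' 2 (n-2)).map (F n hpos)).formPerm := by
    apply cyc_eq
    rw [FL_val hpos _ (by intro k hk; simp [List.mem_range'] at hk; omega),
      range'_sub_one 3 (n-2) (by omega)]
  have hV6 : cyc n ([1, 2, 3] ++ (List.range' 4 (n - 3)).reverse)
      = (([0,1,2] ++ (List.range' 3 (n-3)).reverse).map (F n hpos)).formPerm := by
    apply cyc_eq
    rw [FL_val hpos _ (by intro k hk; simp [List.mem_range'] at hk; omega)]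
    rw [List.map_append, List.map_reverse, range'_sub_one 4 (n-3) (by omega)]
    norm_num
  simp only [OrigamiEquiv, SinvAct, Tact, OB1, OB6]
  rw [hH, hV, hH6, hV6]
  refine ⟨gperm n hn, ?_, ?_⟩
  · -- first component
    have E1 : ∀ g h v : Equiv.Perm (Fin n),
        g * (h * v * v * (v * (h * v * v)⁻¹)) * g⁻¹ = g * h * v * (g * h)⁻¹ := by
      intros; group
    rw [E1, formPerm_conj]
    have ndH6 : ((List.range' 2 (n-2)).map (F n hpos)).Nodup := by
      apply List.Nodup.of_map Fin.val
      rw [FL_val hpos _ (by intro k hk; simp [List.mem_range'] at hk; omega)]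
      exact List.nodup_range' (h := Nat.one_pos)
    have key : ((List.range (n-2)).map (F n hpos)).map
          (⇑(gperm n hn * ([F n hpos (n-3), F n hpos (n-2), F n hpos (n-1)]).formPerm))
        = ((List.range' 2 (n-2)).map (F n hpos)).rotate 1 := by
      apply List.ext_getElem
      · simp
      · intro i h1 h2
        have hilt : i < n - 2 := by
          simp only [List.length_map, List.length_range] at h1; exact h1
        have hmod : (i + 1) % (n - 2) < n - 2 := Nat.mod_lt _ (by omega)
        simp only [List.getElem_map, List.getElem_range, List.getElem_rotate,
          List.length_map, List.length_range', List.getElem_range']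
        rw [Equiv.Perm.mul_apply, hperm_apply hn hpos i (by omega),
          gperm_apply hn hpos _ (by split_ifs <;> omega)]
        congr 1
        rcases Nat.lt_or_ge i (n-3) with h | h
        · rw [Nat.mod_eq_of_lt (by omega)]
          simp only [if_neg (show ¬ i = n - 3 by omega), if_neg (show ¬ i = n - 2 by omega),
            if_neg (show ¬ i = n - 1 by omega), if_pos (show i + 3 < n by omega)]
          omega
        · have hieq : i = n - 3 := by omega
          rw [show i + 1 = n - 2 by omega, Nat.mod_self]
          simp only [if_pos hieq, if_neg (show ¬ n - 2 + 3 < n by omega),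
            if_neg (show ¬ n - 2 = n - 3 by omega), if_pos rfl, eq_self_iff_true, if_true]
    rw [key, List.formPerm_rotate _ ndH6]
  · -- second component
    have E2 : ∀ g h v : Equiv.Perm (Fin n),
        g * (v * (h * v * v)⁻¹) * g⁻¹ = (g * v * g⁻¹)⁻¹ * (g * h * g⁻¹)⁻¹ := by
      intros; group
    rw [E2, formPerm_conj, formPerm_conj, ← List.formPerm_reverse, ← List.formPerm_reverse]
    have g1 : gperm n hn (F n hpos (n-3)) = F n hpos 0 := by
      rw [gperm_apply hn hpos _ (by omega)]
      congr 1
      rw [if_neg (by omega), if_pos rfl]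
    have g2 : gperm n hn (F n hpos (n-2)) = F n hpos 2 := by
      rw [gperm_apply hn hpos _ (by omega)]
      congr 1
      rw [if_neg (by omega), if_neg (by omega), if_pos rfl]
    have g3 : gperm n hn (F n hpos (n-1)) = F n hpos 1 := by
      rw [gperm_apply hn hpos _ (by omega)]
      congr 1
      rw [if_neg (by omega), if_neg (by omega), if_neg (by omega)]
    have eB : ([F n hpos (n-3), F n hpos (n-2), F n hpos (n-1)]).map (⇑(gperm n hn))
        = [F n hpos 0, F n hpos 2, F n hpos 1] := by
      simp [g1, g2, g3]
    have eA : ((List.range (n-2)).map (F n hpos)).map (⇑(gperm n hn))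
        = ((List.range' 3 (n-3)).map (F n hpos)) ++ [F n hpos 0] := by
      apply List.ext_getElem
      · simp; omega
      · intro i h1 h2
        have hilt : i < n - 2 := by
          simp only [List.length_map, List.length_range] at h1; exact h1
        simp only [List.getElem_map, List.getElem_range]
        rw [gperm_apply hn hpos i (by omega)]
        rcases Nat.lt_or_ge i (n-3) with h | h
        · rw [List.getElem_append_left (by simp; omega), List.getElem_map, List.getElem_range']
          congr 1
          rw [if_pos (show i + 3 < n by omega)]
          omega
        · have hieq : i = n - 3 := by omega
          rw [List.getElem_append_right (by simp; omega), List.getElem_singleton]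
          congr 1
          rw [if_neg (by omega), if_pos (by omega)]
    rw [eA, eB]
    have eV : (([0,1,2] ++ (List.range' 3 (n-3)).reverse).map (F n hpos))
        = F n hpos 0 :: ([F n hpos 1, F n hpos 2]
          ++ ((List.range' 3 (n-3)).map (F n hpos)).reverse) := by
      simp [List.map_reverse]
    have ndV6 : (([0,1,2] ++ (List.range' 3 (n-3)).reverse).map (F n hpos)).Nodup := by
      apply List.Nodup.of_map Fin.val
      rw [FL_val hpos _ (by intro k hk; simp [List.mem_range'] at hk; omega)]
      simp [List.nodup_append, List.mem_range', List.nodup_range']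
      exact ⟨fun x _ => by omega, fun x _ => by omega, fun x _ => by omega⟩
    have nd012 : ([F n hpos 0, F n hpos 1, F n hpos 2] : List (Fin n)).Nodup := by
      apply List.Nodup.of_map Fin.val
      rw [show ([F n hpos 0, F n hpos 1, F n hpos 2] : List (Fin n)).map Fin.val = [0,1,2] by
        simp [F_val, Nat.mod_eq_of_lt (show 0 < n by omega),
          Nat.mod_eq_of_lt (show 1 < n by omega), Nat.mod_eq_of_lt (show 2 < n by omega)]]
      decide
    have e012 : ([F n hpos 1, F n hpos 2, F n hpos 0] : List (Fin n))
        = [F n hpos 0, F n hpos 1, F n hpos 2].rotate 1 := by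
      norm_num [List.rotate]
    have rev : (((List.range' 3 (n-3)).map (F n hpos)) ++ [F n hpos 0]).reverse
        = F n hpos 0 :: ((List.range' 3 (n-3)).map (F n hpos)).reverse := by
      simp
    have revB : ([F n hpos 0, F n hpos 2, F n hpos 1] : List (Fin n)).reverse
        = [F n hpos 1, F n hpos 2, F n hpos 0] := by simp
    rw [rev, revB, e012, List.formPerm_rotate _ nd012,
      show ([F n hpos 0, F n hpos 1, F n hpos 2] : List (Fin n))
        = F n hpos 0 :: [F n hpos 1, F n hpos 2] from rfl,
      formPerm_merge [F n hpos 1, F n hpos 2] (F n hpos 0)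
        (((List.range' 3 (n-3)).map (F n hpos)).reverse) (eV ▸ ndV6), ← eV]
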